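/- Let σ > 0, let n be a positive integer, and let x = (x_1, …, x_n), y = (y_1, …, y_n) ∈ ℝ^n. Then the inner product of the tensor-product coherent states ψ_x = ψ_{x_1} ⊗ ⋯ ⊗ ψ_{x_n} and ψ_y = ψ_{y_1} ⊗ ⋯ ⊗ ψ_{y_n} equals exp( −‖x − y‖² / (2σ²) ); explicitly, Σ_{k : {1,…,n} → ℕ} ∏_{i=1}^n ψ_{x_i}(k_i) · ψ_{y_i}(k_i) = exp( −‖x − y‖² / (2σ²) ), where ‖·‖ is the Euclidean norm on ℝ^n. -/
import Mathlib


open Real Finset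

/-- The coherent state of a real number `r` (with width `σ`): the sequence in
`ℓ²(ℕ, ℝ)` given by `ψ_r(k) = e^{−r²/(2σ²)}·(r/σ)^k/√(k!)`. -/
noncomputable def coherent (σ r : ℝ) : ℕ → ℝ := fun k =>
  Real.exp (-(r ^ 2) / (2 * σ ^ 2)) * (r / σ) ^ k / Real.sqrt (Nat.factorial k)

lemma coherent_mul (σ r s : ℝ) (k : ℕ) :
    coherent σ r k * coherent σ s k =
      (Real.exp (-(r ^ 2) / (2 * σ ^ 2)) * Real.exp (-(s ^ 2) / (2 * σ ^ 2))) *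
        ((r * s / σ ^ 2) ^ k / (Nat.factorial k : ℝ)) := by
  have hk : Real.sqrt (Nat.factorial k) * Real.sqrt (Nat.factorial k) = (Nat.factorial k : ℝ) :=
    Real.mul_self_sqrt (by positivity)
  have hk0 : (Nat.factorial k : ℝ) ≠ 0 := by positivity
  have hs : Real.sqrt (Nat.factorial k) ≠ 0 := by
    intro h; rw [h, mul_zero] at hk; exact hk0 hk.symm
  have h2 : (r / σ) ^ k * (s / σ) ^ k = (r * s / σ ^ 2) ^ k := by
    rw [← mul_pow, div_mul_div_comm, sq]
  simp only [coherent]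
  rw [div_mul_div_comm, hk, mul_mul_mul_comm, h2, mul_div_assoc]

lemma summable_coherent_mul_norm (σ : ℝ) (r s : ℝ) :
    Summable fun k => ‖coherent σ r k * coherent σ s k‖ := by
  have h := (Real.summable_pow_div_factorial |r * s / σ ^ 2|).mul_left
    (Real.exp (-(r ^ 2) / (2 * σ ^ 2)) * Real.exp (-(s ^ 2) / (2 * σ ^ 2)))
  refine h.congr fun k => ?_
  rw [coherent_mul σ r s k]
  simp [Real.norm_eq_abs, abs_mul, abs_div, abs_pow, Real.abs_exp, sq_abs, Nat.abs_cast]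

lemma tsum_coherent_mul (σ : ℝ) (hσ : 0 < σ) (r s : ℝ) :
    ∑' k, coherent σ r k * coherent σ s k = Real.exp (-(r - s) ^ 2 / (2 * σ ^ 2)) := by
  have hexp : ∑' k : ℕ, (r * s / σ ^ 2) ^ k / (Nat.factorial k : ℝ) =
      Real.exp (r * s / σ ^ 2) := by
    rw [Real.exp_eq_exp_ℝ, NormedSpace.exp_eq_tsum_div]
  calc ∑' k, coherent σ r k * coherent σ s k
      = ∑' k, (Real.exp (-(r ^ 2) / (2 * σ ^ 2)) * Real.exp (-(s ^ 2) / (2 * σ ^ 2))) *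
          ((r * s / σ ^ 2) ^ k / (Nat.factorial k : ℝ)) := by
        exact tsum_congr fun k => coherent_mul σ r s k
    _ = (Real.exp (-(r ^ 2) / (2 * σ ^ 2)) * Real.exp (-(s ^ 2) / (2 * σ ^ 2))) *
          Real.exp (r * s / σ ^ 2) := by rw [tsum_mul_left, hexp]
    _ = Real.exp (-(r - s) ^ 2 / (2 * σ ^ 2)) := by
        rw [← Real.exp_add, ← Real.exp_add]
        congr 1
        have hσ2 : σ ^ 2 ≠ 0 := by positivity
        field_simp
        ring

set_option maxHeartbeats 1000000 in
/-- tsum over a pi type of products of summable functions. -/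
lemma tsum_pi_prod : ∀ (n : ℕ) (f : Fin n → ℕ → ℝ),
    (∀ i, Summable fun k => ‖f i k‖) →
    (Summable fun k : Fin n → ℕ => ‖∏ i, f i (k i)‖) ∧
    ∑' k : Fin n → ℕ, ∏ i, f i (k i) = ∏ i, ∑' k, f i k := by
  intro n
  induction n with
  | zero =>
    intro f _
    constructor
    · exact Summable.of_finite
    · simp
  | succ n ih =>
    intro f hf
    obtain ⟨ihS, ihE⟩ := ih (fun i => f i.succ) (fun i => hf i.succ)
    obtain ⟨G, hG⟩ : ∃ G, G = fun b : Fin n → ℕ => ∏ i : Fin n, f i.succ (b i) := ⟨_, rfl⟩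
    have hGsum : Summable fun b : Fin n → ℕ => ‖G b‖ := by rw [hG]; exact ihS
    have hGtsum : ∑' b : Fin n → ℕ, G b = ∏ i : Fin n, ∑' k : ℕ, f i.succ k := by
      rw [hG]; exact ihE
    set e := Fin.consEquiv (fun _ : Fin (n + 1) => ℕ)
    have hcomp : ∀ p : ℕ × (Fin n → ℕ),
        (∏ i, f i (e p i)) = f 0 p.1 * G p.2 := by
      intro p
      rw [Fin.prod_univ_succ, hG]
      simp [e, Fin.consEquiv]
    have hS : Summable fun p : ℕ × (Fin n → ℕ) => ‖f 0 p.1 * G p.2‖ :=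
      Summable.mul_norm (hf 0) hGsum
    constructor
    · refine (Equiv.summable_iff e).mp ?_
      refine hS.congr fun p => ?_
      simp only [Function.comp_apply]
      rw [hcomp p]
    · rw [← e.tsum_eq]
      have h1 : ∑' p : ℕ × (Fin n → ℕ), ∏ i, f i (e p i)
          = ∑' p : ℕ × (Fin n → ℕ), f 0 p.1 * G p.2 := tsum_congr hcomp
      rw [h1, ← tsum_mul_tsum_of_summable_norm (hf 0) hGsum, hGtsum, Fin.prod_univ_succ]

/-- The inner product of the tensor-product coherent states
`ψ_x = ψ_{x_1} ⊗ ⋯ ⊗ ψ_{x_n}` and `ψ_y = ψ_{y_1} ⊗ ⋯ ⊗ ψ_{y_n}` of two vectors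
`x, y ∈ ℝ^n` equals `exp(−‖x − y‖²/(2σ²))`:
`Σ_{k : {1,…,n} → ℕ} ∏_i ψ_{x_i}(k_i)·ψ_{y_i}(k_i) = exp(−‖x − y‖²/(2σ²))`,
where `‖·‖` is the Euclidean norm on `ℝ^n`. -/
theorem coherent_tensor_inner (σ : ℝ) (hσ : 0 < σ) (n : ℕ) (hn : 0 < n)
    (x y : EuclideanSpace ℝ (Fin n)) :
    ∑' k : Fin n → ℕ, ∏ i : Fin n, coherent σ (x i) (k i) * coherent σ (y i) (k i) =
      Real.exp (-‖x - y‖ ^ 2 / (2 * σ ^ 2)) := by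
  have h := tsum_pi_prod n (fun i k => coherent σ (x i) k * coherent σ (y i) k)
    (fun i => summable_coherent_mul_norm σ (x i) (y i))
  rw [h.2]
  have hnorm : ‖x - y‖ ^ 2 = ∑ i : Fin n, (x i - y i) ^ 2 := by
    rw [EuclideanSpace.norm_eq, Real.sq_sqrt (by positivity)]
    refine Finset.sum_congr rfl fun i _ => ?_
    simp [Real.norm_eq_abs, sq_abs]
  rw [hnorm]
  have hre : Real.exp ((-∑ i : Fin n, (x i - y i) ^ 2) / (2 * σ ^ 2)) =
      ∏ i : Fin n, Real.exp (-(x i - y i) ^ 2 / (2 * σ ^ 2)) := by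
    rw [← Real.exp_sum]
    congr 1
    rw [← Finset.sum_neg_distrib, Finset.sum_div]
  rw [hre]
  refine Finset.prod_congr rfl fun i _ => ?_
  show ∑' k, coherent σ (x i) k * coherent σ (y i) k = Real.exp (-(x i - y i) ^ 2 / (2 * σ ^ 2))
  exact tsum_coherent_mul σ hσ (x i) (y i)
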